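/- Let n ≥ 5, 1 ≤ i₁ < i₂ < i₃ < i₄ ≤ n, π ∈ Sₙ an involution with π(i₁)=i₃, π(i₂)=i₄, and let α : {1,…,n−4} → {1,…,n} be the unique strictly increasing map whose image omits {i₁,i₂,i₃,i₄}. Then the induced involution π_α on {1,…,n−4} satisfies o((1,…,n)π) = o((1,…,n−4)·γ π_α γ⁻¹) for a suitable permutation γ ∈ S_{n−4}; in particular the number of orbits of (1,…,n)π equals the number of orbits of the first-return permutation of (1,…,n)π on the complement of {i₁,i₂,i₃,i₄}. -/

import Mathlib

/-!
If `e` is the first-return map of `σ` on `range α` and every `σ`-orbit meets `range α`, then `α`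
induces a bijection from the orbits of `e` onto those of `σ`. The product `c = (1,…,n)π` agrees
off `range α` with `σ = (1,…,n)(i₁ i₃)(i₂ i₄)`, which is a single `n`-cycle because the chords
`i₁i₃` and `i₂i₄` cross. Hence every `c`-orbit meets `range α`, and the first-return map of `σ` is
`c_α π_α⁻¹`, again a single cycle and so conjugate to `(1,…,n-4)` by some `γ`; then
`(1,…,n-4) γ π_α γ⁻¹ = γ c_α γ⁻¹` has as many orbits as `c`.
-/

def orbits {X : Type*} (σ : Equiv.Perm X) : Set (Set X) :=
  {A | ∃ x : X, A = {z | ∃ n : ℤ, (σ ^ n) x = z}}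

/-- `e` is the permutation of `Y` induced (first-return) by `σ` through the injection `α`. -/
def IsInducedPerm {X Y : Type*} (α : Y → X) (σ : Equiv.Perm X) (e : Equiv.Perm Y) : Prop :=
  ∀ y : Y, ∃ m : ℕ, 1 ≤ m ∧
    (∀ k : ℕ, 1 ≤ k → k < m → (σ ^ k) (α y) ∉ Set.range α) ∧
    α (e y) = (σ ^ m) (α y)

open Equiv Equiv.Perm

variable {X Y : Type*}

lemma orbits_eq_range (σ : Perm X) : orbits σ = Set.range fun x => {z | σ.SameCycle x z} := by
  ext A
  exact exists_congr fun _ => eq_comm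

lemma card_orbits_eq_card_quotient (σ : Perm X) :
    Nat.card (orbits σ) = Nat.card (Quotient (SameCycle.setoid σ)) := by
  have hker : Setoid.ker (fun x => {z | σ.SameCycle x z}) = SameCycle.setoid σ := by
    ext x y
    rw [Setoid.ker_def]
    refine ⟨fun h => (h ▸ SameCycle.refl σ y : y ∈ {z | σ.SameCycle x z}), fun h => ?_⟩
    ext z
    exact ⟨h.symm.trans, h.trans⟩
  rw [orbits_eq_range, ← Nat.card_congr (Setoid.quotientKerEquivRange _), hker]

namespace IsInducedPerm

variable {α : Y → X} {σ : Perm X} {e : Perm Y}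

lemma exists_pow_apply (h : IsInducedPerm α σ e) (y : Y) (k : ℕ) :
    ∃ m : ℕ, α ((e ^ k) y) = (σ ^ m) (α y) := by
  induction k with
  | zero => exact ⟨0, rfl⟩
  | succ k ih =>
    obtain ⟨m, hm⟩ := ih
    obtain ⟨m', -, -, hret⟩ := h ((e ^ k) y)
    exact ⟨m' + m, by rw [pow_succ', mul_apply, hret, hm, pow_add, mul_apply]⟩

lemma exists_pow_apply_eq (hα : Function.Injective α) (h : IsInducedPerm α σ e) {j : ℕ}
    {y y' : Y} (hj : (σ ^ j) (α y) = α y') : ∃ k : ℕ, (e ^ k) y = y' := by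
  induction j using Nat.strong_induction_on generalizing y with
  | _ j ih =>
    obtain ⟨m, hm, hfirst, hret⟩ := h y
    rcases lt_or_ge j m with hjm | hmj
    · rcases Nat.eq_zero_or_pos j with rfl | hj0
      · exact ⟨0, hα hj⟩
      · exact absurd ⟨y', hj.symm⟩ (hfirst j hj0 hjm)
    · have hrest : (σ ^ (j - m)) (α (e y)) = α y' := by
        rw [hret, ← mul_apply, ← pow_add, Nat.sub_add_cancel hmj, hj]
      obtain ⟨k, hk⟩ := ih (j - m) (by omega) hrest
      exact ⟨k + 1, by rw [pow_succ, mul_apply, hk]⟩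

lemma sameCycle_apply_iff [Finite X] (hα : Function.Injective α) (h : IsInducedPerm α σ e)
    {y y' : Y} : σ.SameCycle (α y) (α y') ↔ e.SameCycle y y' := by
  have : Finite Y := Finite.of_injective α hα
  constructor
  · intro hsc
    obtain ⟨j, -, hj⟩ := hsc.exists_pow_eq'
    obtain ⟨k, hk⟩ := h.exists_pow_apply_eq hα hj
    exact ⟨k, by rw [zpow_natCast, hk]⟩
  · intro hsc
    obtain ⟨k, -, hk⟩ := hsc.exists_pow_eq'
    obtain ⟨m, hm⟩ := h.exists_pow_apply y k
    exact ⟨m, by rw [zpow_natCast, ← hm, hk]⟩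

lemma card_orbits_eq [Finite X] (hα : Function.Injective α) (h : IsInducedPerm α σ e)
    (hmeet : ∀ x, ∃ y, σ.SameCycle x (α y)) : Nat.card (orbits σ) = Nat.card (orbits e) := by
  rw [card_orbits_eq_card_quotient, card_orbits_eq_card_quotient]
  refine (Nat.card_eq_of_bijective
    (Quotient.map α fun _ _ => (h.sameCycle_apply_iff hα).2) ⟨?_, ?_⟩).symm
  · rintro ⟨y⟩ ⟨y'⟩ hyy'
    exact Quotient.sound ((h.sameCycle_apply_iff hα).1 (Quotient.exact hyy'))
  · rintro ⟨x⟩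
    obtain ⟨y, hy⟩ := hmeet x
    exact ⟨⟦y⟧, Quotient.sound hy.symm⟩

lemma apply_eq_of_apply_mem_range (h : IsInducedPerm α σ e) {y : Y}
    (hy : σ (α y) ∈ Set.range α) : α (e y) = σ (α y) := by
  obtain ⟨m, hm, hfirst, hret⟩ := h y
  obtain rfl : m = 1 := by
    by_contra hm1
    exact hfirst 1 le_rfl (by omega) (by rwa [pow_one])
  rw [hret, pow_one]

lemma mul_inv {c : Perm X} {p : Perm Y} (h : IsInducedPerm α c e)
    (hout : ∀ x ∉ Set.range α, c x = σ x) (hin : ∀ y, c (α y) = σ (α (p y))) :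
    IsInducedPerm α σ (e * p⁻¹) := by
  intro y
  obtain ⟨m, hm, hfirst, hret⟩ := h (p⁻¹ y)
  have hpath : ∀ k < m, (c ^ (k + 1)) (α (p⁻¹ y)) = (σ ^ (k + 1)) (α y) := by
    intro k
    induction k with
    | zero =>
      intro _
      rw [zero_add, pow_one, pow_one, hin, ← mul_apply, mul_inv_cancel, one_apply]
    | succ k ih =>
      intro hk
      have hk1 := ih (by omega)
      rw [pow_succ', mul_apply, hk1, hout _ (hk1 ▸ hfirst (k + 1) (by omega) hk),
        pow_succ' σ (k + 1), mul_apply]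
  refine ⟨m, hm, fun k hk hkm => ?_, ?_⟩
  · obtain ⟨k, rfl⟩ : ∃ k', k = k' + 1 := ⟨k - 1, by omega⟩
    rw [← hpath k (by omega)]
    exact hfirst (k + 1) hk hkm
  · obtain ⟨k, rfl⟩ : ∃ k', m = k' + 1 := ⟨m - 1, by omega⟩
    rw [mul_apply, hret, hpath k (by omega)]

lemma permCongr {Y' : Type*} (h : IsInducedPerm α σ e) (β : Y' ≃ Y) :
    IsInducedPerm (α ∘ β) σ (β.symm.permCongr e) := by
  intro y
  obtain ⟨m, hm, hfirst, hret⟩ := h (β y)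
  refine ⟨m, hm, ?_, ?_⟩
  · simpa only [EquivLike.range_comp, Function.comp_apply] using hfirst
  · simpa [permCongr_apply] using hret

end IsInducedPerm

lemma card_orbits_conj [Finite X] (γ σ : Perm X) :
    Nat.card (orbits (γ * σ * γ⁻¹)) = Nat.card (orbits σ) :=
  IsInducedPerm.card_orbits_eq γ.injective
    (fun x => ⟨1, le_rfl, fun _ h h' => absurd h' (by omega), by simp⟩)
    fun x => ⟨γ⁻¹ x, by rw [← mul_apply, mul_inv_cancel, one_apply]⟩

lemma exists_sameCycle_apply_of_eqOn_compl_range [Finite X] {α : Y → X} {c σ : Perm X}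
    (hout : ∀ x ∉ Set.range α, c x = σ x) (hσ : ∀ x, ∃ y, σ.SameCycle x (α y)) (x : X) :
    ∃ y, c.SameCycle x (α y) := by
  by_contra! hc
  have hnot : ∀ k : ℕ, (c ^ k) x ∉ Set.range α := by
    rintro k ⟨y, hy⟩
    exact hc y ⟨k, by rw [zpow_natCast, hy]⟩
  have hagree : ∀ k : ℕ, (c ^ k) x = (σ ^ k) x := by
    intro k
    induction k with
    | zero => rfl
    | succ k ih => rw [pow_succ', mul_apply, hout _ (hnot k), ih, pow_succ', mul_apply]
  obtain ⟨y, hy⟩ := hσ x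
  obtain ⟨k, -, hk⟩ := hy.exists_pow_eq'
  exact hnot k ⟨y, by rw [hagree, hk]⟩

lemma isConj_finRotate_of_forall_sameCycle {k : ℕ} {g : Perm (Fin k)}
    (hg : ∀ x y, g.SameCycle x y) : IsConj g (finRotate k) := by
  rcases le_or_gt k 1 with hk | hk
  · have : Subsingleton (Fin k) := Fin.subsingleton_iff_le_one.2 hk
    rw [Subsingleton.elim g (finRotate k)]
  · have : Nontrivial (Fin k) := Fin.nontrivial_iff_two_le.2 hk
    have hcyc : g.IsCycleOn Set.univ := ⟨g.bijOn (by simp), fun x _ y _ => hg x y⟩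
    have hsupp : g.support = Finset.univ := Finset.eq_univ_of_forall fun x =>
      mem_support.2 (hcyc.apply_ne Set.nontrivial_univ (Set.mem_univ x))
    have hg : g.IsCycle :=
      isCycle_iff_exists_isCycleOn.2 ⟨_, Set.nontrivial_univ, hcyc, fun x _ => trivial⟩
    refine hg.isConj (isCycle_finRotate_of_le hk) ?_
    rw [hsupp, support_finRotate_of_le hk]

section

variable {π : Perm X} {a b c d : X}

lemma apply_mem_insert_four_iff (hinv : π * π = 1) (ha : π a = c) (hb : π b = d) {x : X} :
    π x ∈ ({a, b, c, d} : Set X) ↔ x ∈ ({a, b, c, d} : Set X) := by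
  have hππ : ∀ z, π (π z) = z := fun z => by rw [← mul_apply, hinv, one_apply]
  have hmaps : ∀ z ∈ ({a, b, c, d} : Set X), π z ∈ ({a, b, c, d} : Set X) := by
    rintro z (rfl | rfl | rfl | rfl)
    · simp [ha]
    · simp [hb]
    · simp [← ha, hππ]
    · simp [← hb, hππ]
  exact ⟨fun h => hππ x ▸ hmaps _ h, hmaps x⟩

lemma apply_eq_swap_mul_swap_of_mem [DecidableEq X] (hab : a ≠ b) (had : a ≠ d) (hcb : c ≠ b)
    (hcd : c ≠ d) (hinv : π * π = 1) (ha : π a = c) (hb : π b = d) {x : X}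
    (hx : x ∈ ({a, b, c, d} : Set X)) : π x = (swap a c * swap b d) x := by
  have hππ : ∀ z, π (π z) = z := fun z => by rw [← mul_apply, hinv, one_apply]
  rcases hx with rfl | rfl | hx | hx <;> rw [mul_apply]
  · rw [ha, swap_apply_of_ne_of_ne hab had, swap_apply_left]
  · rw [hb, swap_apply_left, swap_apply_of_ne_of_ne had.symm hcd.symm]
  · rw [hx, swap_apply_of_ne_of_ne hcb hcd, swap_apply_right, ← ha, hππ]
  · rw [hx, swap_apply_right, swap_apply_of_ne_of_ne hab.symm hcb.symm, ← hb, hππ]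

lemma swap_mul_swap_apply_of_notMem [DecidableEq X] {x : X} (hx : x ∉ ({a, b, c, d} : Set X)) :
    (swap a c * swap b d) x = x := by
  simp only [Set.mem_insert_iff, Set.mem_singleton_iff, not_or] at hx
  rw [mul_apply, swap_apply_of_ne_of_ne hx.2.1 hx.2.2.2, swap_apply_of_ne_of_ne hx.1 hx.2.2.1]

end

lemma sameCycle_of_forall_apply_eq_succ {n : ℕ} {σ : Perm (Fin n)} {a b : Fin n} (hab : a ≤ b)
    (hσ : ∀ z : Fin n, a ≤ z → z < b → (σ z : ℕ) = z + 1) : σ.SameCycle a b := by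
  obtain ⟨d, hd⟩ : ∃ d, (b : ℕ) = a + d := ⟨b - a, by omega⟩
  induction d generalizing a with
  | zero => rw [Fin.ext (by omega : (a : ℕ) = b)]
  | succ d ih =>
    have hstep := hσ a le_rfl (by omega)
    exact (sameCycle_apply_right.2 (SameCycle.refl σ a)).trans
      (ih (by omega) (fun z h1 h2 => hσ z (by omega) h2) (by omega))

lemma sameCycle_finRotate_mul_of_forall_apply_eq_self {m : ℕ} {τ : Perm (Fin (m + 1))}
    {u v : Fin (m + 1)} (huv : u ≤ v) (hτ : ∀ z, u ≤ z → z < v → τ z = z) :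
    (finRotate (m + 1) * τ).SameCycle u v :=
  sameCycle_of_forall_apply_eq_succ huv fun z h1 h2 => by
    rw [mul_apply, hτ z h1 h2, coe_finRotate_of_ne_last (h2.trans_le v.le_last).ne]

lemma sameCycle_finRotate_mul_of_apply_lt {m : ℕ} {τ : Perm (Fin (m + 1))} {u w : Fin (m + 1)}
    (hu : τ u < w) (hτ : ∀ z, τ u < z → z < w → τ z = z) :
    (finRotate (m + 1) * τ).SameCycle u w := by
  have hsucc : ((finRotate (m + 1) * τ) u : ℕ) = τ u + 1 :=
    coe_finRotate_of_ne_last (hu.trans_le w.le_last).ne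
  refine (sameCycle_apply_right.2 (SameCycle.refl _ u)).trans ?_
  exact sameCycle_finRotate_mul_of_forall_apply_eq_self (by omega)
    fun z h1 h2 => hτ z (by omega) h2

lemma sameCycle_finRotate_mul_swap_mul_swap {n : ℕ} {a b c d : Fin n} (hab : a < b)
    (hbc : b < c) (hcd : c < d) (x y : Fin n) :
    (finRotate n * (swap a c * swap b d)).SameCycle x y := by
  obtain ⟨m, rfl⟩ : ∃ m, n = m + 1 := ⟨n - 1, by omega⟩
  set τ := swap a c * swap b d
  have hτ : τ a = c ∧ τ b = d ∧ τ c = a ∧ τ d = b := by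
    simp only [τ, mul_apply, swap_apply_def]
    refine ⟨?_, ?_, ?_, ?_⟩ <;> split_ifs <;> first | rfl | omega
  obtain ⟨hτa, hτb, hτc, hτd⟩ := hτ
  have hfix : ∀ z, z ≠ a ∧ z ≠ b ∧ z ≠ c ∧ z ≠ d → τ z = z := fun z ⟨ha, hb, hc, hd⟩ =>
    swap_mul_swap_apply_of_notMem (by simp [ha, hb, hc, hd])
  have hlast : d < Fin.last m → (finRotate (m + 1) * τ).SameCycle (Fin.last m) 0 := by
    intro hd
    have hσlast : (finRotate (m + 1) * τ) (Fin.last m) = 0 := by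
      rw [mul_apply, hfix _ (by omega), finRotate_last]
    exact hσlast ▸ sameCycle_apply_right.2 (SameCycle.refl _ _)
  have hdc := sameCycle_finRotate_mul_of_apply_lt (hτd ▸ hbc) fun z h1 h2 => hfix z (by omega)
  have hcb := sameCycle_finRotate_mul_of_apply_lt (hτc ▸ hab) fun z h1 h2 => hfix z (by omega)
  have hb0 : (finRotate (m + 1) * τ).SameCycle b 0 := by
    rcases d.le_last.lt_or_eq with hd | rfl
    · refine (sameCycle_finRotate_mul_of_apply_lt (hτb ▸ hd) fun z h1 h2 => ?_).trans (hlast hd)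
      exact hfix z (by omega)
    · rw [← finRotate_last, ← hτb, ← mul_apply]
      exact sameCycle_apply_right.2 (SameCycle.refl _ _)
  have hc0 := hcb.trans hb0
  have hd0 := hdc.trans hc0
  have ha0 := (sameCycle_finRotate_mul_of_apply_lt (hτa ▸ hcd) fun z h1 h2 =>
    hfix z (by omega)).trans hd0
  have h0 : ∀ z, (finRotate (m + 1) * τ).SameCycle z 0 := by
    intro z
    have seg := fun w (hzw : z ≤ w) (hQ : ∀ v, z ≤ v → v < w → v ≠ a ∧ v ≠ b ∧ v ≠ c ∧ v ≠ d) =>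
      sameCycle_finRotate_mul_of_forall_apply_eq_self hzw fun v h1 h2 => hfix v (hQ v h1 h2)
    rcases le_or_gt z a with hza | hza
    · exact (seg a hza fun v h1 h2 => by omega).trans ha0
    rcases le_or_gt z b with hzb | hzb
    · exact (seg b hzb fun v h1 h2 => by omega).trans hb0
    rcases le_or_gt z c with hzc | hzc
    · exact (seg c hzc fun v h1 h2 => by omega).trans hc0
    rcases le_or_gt z d with hzd | hzd
    · exact (seg d hzd fun v h1 h2 => by omega).trans hd0
    · exact (seg _ z.le_last fun v h1 h2 => by omega).trans (hlast (hzd.trans_le z.le_last))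
  exact (h0 x).trans (h0 y).symm

theorem stmt_16 (n : ℕ) (hn : 5 ≤ n) (i1 i2 i3 i4 : Fin n)
    (h12 : i1 < i2) (h23 : i2 < i3) (h34 : i3 < i4)
    (π : Equiv.Perm (Fin n)) (hinv : π * π = 1) (hπ1 : π i1 = i3) (hπ2 : π i2 = i4)
    (α : Fin (n - 4) → Fin n) (hα : StrictMono α)
    (hrange : Set.range α = ({i1, i2, i3, i4} : Set (Fin n))ᶜ)
    (πα : Equiv.Perm (Fin (n - 4))) (hπα : IsInducedPerm α π πα)
    (e : Equiv.Perm (({i1, i2, i3, i4} : Set (Fin n))ᶜ : Set (Fin n)))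
    (he : IsInducedPerm (Subtype.val : (({i1, i2, i3, i4} : Set (Fin n))ᶜ : Set (Fin n)) → Fin n)
      (finRotate n * π) e) :
    (∃ γ : Equiv.Perm (Fin (n - 4)),
        Nat.card (orbits (finRotate n * π)) =
          Nat.card (orbits (finRotate (n - 4) * (γ * πα * γ⁻¹)))) ∧
      Nat.card (orbits (finRotate n * π)) = Nat.card (orbits e) := by
  set c := finRotate n * π
  set σ := finRotate n * (swap i1 i3 * swap i2 i4)
  have hσ : ∀ x y, σ.SameCycle x y := sameCycle_finRotate_mul_swap_mul_swap h12 h23 h34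
  have hQ : ∀ x, x ∉ Set.range α ↔ x ∈ ({i1, i2, i3, i4} : Set (Fin n)) := fun x => by
    rw [hrange, Set.notMem_compl_iff]
  have hout : ∀ x ∉ Set.range α, c x = σ x := fun x hx => congrArg (finRotate n)
    (apply_eq_swap_mul_swap_of_mem (by omega) (by omega) (by omega) (by omega) hinv hπ1 hπ2
      ((hQ x).1 hx))
  have hin : ∀ y, c (α y) = σ (α (πα y)) := by
    intro y
    have hπy : π (α y) ∈ Set.range α := not_not.1 fun h =>
      (hQ (α y)).2 ((apply_mem_insert_four_iff hinv hπ1 hπ2).1 ((hQ _).1 h)) ⟨y, rfl⟩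
    rw [hπα.apply_eq_of_apply_mem_range hπy]
    exact congrArg (finRotate n) (swap_mul_swap_apply_of_notMem fun h => (hQ _).2 h hπy).symm
  have hcmeet : ∀ x, ∃ y, c.SameCycle x (α y) :=
    exists_sameCycle_apply_of_eqOn_compl_range hout fun x => ⟨⟨0, by omega⟩, hσ _ _⟩
  let β : Fin (n - 4) ≃ (({i1, i2, i3, i4} : Set (Fin n))ᶜ : Set (Fin n)) :=
    (Equiv.ofInjective α hα.injective).trans (Equiv.setCongr hrange)
  have heh : IsInducedPerm α c (β.symm.permCongr e) := he.permCongr β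
  obtain ⟨γ, hγ⟩ := isConj_iff.1 (isConj_finRotate_of_forall_sameCycle fun x y =>
    ((heh.mul_inv hout hin).sameCycle_apply_iff hα.injective).1 (hσ _ _))
  refine ⟨⟨γ, ?_⟩, he.card_orbits_eq Subtype.val_injective fun x => ?_⟩
  · rw [heh.card_orbits_eq hα.injective hcmeet, ← card_orbits_conj γ, ← hγ]
    congr 2
    group
  · obtain ⟨y, hy⟩ := hcmeet x
    exact ⟨β y, hy⟩
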